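/- arXiv:1203.1364 — 6 statements merged into one kernel-verified Lean document; each statement's English description precedes it below -/
import Mathlib

section
/- Every separable state satisfies the Peres condition: if ρ is a finite convex combination of projectors onto product vectors, then its partial transpose ρ^Γ is positive semidefinite. -/
open Matrix
open scoped ComplexOrder

/-- Partial transpose with respect to the A system (in the standard basis). -/
noncomputable def ptranspose {M N : ℕ} (ρ : Matrix (Fin M × Fin N) (Fin M × Fin N) ℂ) :
    Matrix (Fin M × Fin N) (Fin M × Fin N) ℂ :=
  Matrix.of fun p q => ρ (q.1, p.2) (p.1, q.2)

/-- Partial trace over the A system: the reduced operator ρ_B. -/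
noncomputable def ptraceA {M N : ℕ} (ρ : Matrix (Fin M × Fin N) (Fin M × Fin N) ℂ) :
    Matrix (Fin N) (Fin N) ℂ :=
  Matrix.of fun j l => ∑ i, ρ (i, j) (i, l)

/-- Partial trace over the B system: the reduced operator ρ_A. -/
noncomputable def ptraceB {M N : ℕ} (ρ : Matrix (Fin M × Fin N) (Fin M × Fin N) ℂ) :
    Matrix (Fin M) (Fin M) ℂ :=
  Matrix.of fun i k => ∑ j, ρ (i, j) (k, j)

/-! The partial transpose of a product projector `|a ⊗ b⟩⟨a ⊗ b|` is the product projector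
`|ā ⊗ b⟩⟨ā ⊗ b|`, since transposing the rank-one operator `|a⟩⟨a|` conjugates `a`.
A separable state is a convex combination of product projectors and the partial transpose is
linear, so its partial transpose is a convex combination of projectors, hence positive
semidefinite. -/

def tensorVec {R m n : Type*} [Mul R] (a : m → R) (b : n → R) : m × n → R :=
  fun q => a q.1 * b q.2

section ptranspose

variable {M N : ℕ}

theorem ptranspose_sum {ι : Type*} (s : Finset ι)
    (ρ : ι → Matrix (Fin M × Fin N) (Fin M × Fin N) ℂ) :
    ptranspose (∑ i ∈ s, ρ i) = ∑ i ∈ s, ptranspose (ρ i) := by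
  ext q r
  simp only [ptranspose, of_apply, Matrix.sum_apply]

theorem ptranspose_smul (c : ℝ) (ρ : Matrix (Fin M × Fin N) (Fin M × Fin N) ℂ) :
    ptranspose (c • ρ) = c • ptranspose ρ := by
  ext q r
  simp only [ptranspose, of_apply, Matrix.smul_apply]

theorem ptranspose_vecMulVec_tensorVec (a : Fin M → ℂ) (b : Fin N → ℂ) :
    ptranspose (vecMulVec (tensorVec a b) (star (tensorVec a b))) =
      vecMulVec (tensorVec (star a) b) (star (tensorVec (star a) b)) := by
  ext q r
  simp only [ptranspose, tensorVec, of_apply, vecMulVec_apply, Pi.star_apply, star_mul',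
    star_star]
  ring

end ptranspose

theorem ptranspose_separable_posSemidef_general (M N n : ℕ)
    (p : Fin n → ℝ) (hp : ∀ i, 0 ≤ p i)
    (a : Fin n → Fin M → ℂ) (b : Fin n → Fin N → ℂ)
    (ρ : Matrix (Fin M × Fin N) (Fin M × Fin N) ℂ)
    (hρ : ρ = Matrix.of fun q r =>
      ∑ i, (p i : ℂ) * (a i q.1 * b i q.2) * star (a i r.1 * b i r.2)) :
    (ptranspose ρ).PosSemidef := by
  have hρ_sum :
      ρ = ∑ i, p i • vecMulVec (tensorVec (a i) (b i)) (star (tensorVec (a i) (b i))) := by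
    ext q r
    simp only [hρ, tensorVec, of_apply, Matrix.sum_apply, Matrix.smul_apply, vecMulVec_apply,
      Pi.star_apply, Complex.real_smul, mul_assoc]
  rw [hρ_sum, ptranspose_sum]
  simp only [ptranspose_smul, ptranspose_vecMulVec_tensorVec]
  exact posSemidef_sum _ fun i _ => (posSemidef_vecMulVec_self_star _).smul (hp i)

/-- Peres condition: the partial transpose of a separable state is positive
semidefinite. -/
theorem ptranspose_separable_posSemidef (M N n : ℕ)
    (p : Fin n → ℝ) (hp : ∀ i, 0 ≤ p i) (hp1 : ∑ i, p i = 1)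
    (a : Fin n → Fin M → ℂ) (b : Fin n → Fin N → ℂ)
    (ρ : Matrix (Fin M × Fin N) (Fin M × Fin N) ℂ)
    (hρ : ρ = Matrix.of fun q r =>
      ∑ i, (p i : ℂ) * (a i q.1 * b i q.2) * star (a i r.1 * b i r.2)) :
    (ptranspose ρ).PosSemidef :=
  ptranspose_separable_posSemidef_general M N n p hp a b ρ hρ
end

section
/- Let A = B + C where B and C are Hermitian matrices and rank A = rank B + rank C. If A is positive semidefinite, then B and C are both positive semidefinite. -/
/-!
If `rank (B + C) = rank B + rank C`, the column spaces of `B` and `C` are independent and both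
lie in that of `A = B + C`. For any `G` with `A G A = A` this gives `A G B = B`, i.e.
`B - B G B = C G B`, a matrix whose columns lie in both column spaces; hence `B G B = B`
(Marsaglia–Styan). For positive semidefinite `A` one can take `G` positive semidefinite, and then
`B = Bᴴ G B` is positive semidefinite.
-/

open Matrix
open scoped ComplexOrder MatrixOrder
open LinearMap (range)
open Module (finrank)

theorem Submodule.eq_sup_and_disjoint_of_finrank_eq_add {K V : Type*} [DivisionRing K]
    [AddCommGroup V] [Module K V] [FiniteDimensional K V] {S T U : Submodule K V}
    (hU : U ≤ S ⊔ T) (h : finrank K U = finrank K S + finrank K T) :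
    U = S ⊔ T ∧ Disjoint S T := by
  have hsup_inf := finrank_sup_add_finrank_inf_eq S T
  have hle := finrank_mono hU
  have hinf : finrank K ↥(S ⊓ T) = 0 := by omega
  exact ⟨eq_of_le_of_finrank_le hU (by omega), disjoint_iff.2 (finrank_eq_zero.1 hinf)⟩

namespace Matrix

variable {K : Type*} [Field K] {m n p : Type*} [Fintype n]

theorem range_mulVecLin_add_le (B C : Matrix m n K) :
    range (B + C).mulVecLin ≤ range B.mulVecLin ⊔ range C.mulVecLin := by
  rw [show (B + C).mulVecLin = B.mulVecLin + C.mulVecLin by ext; simp]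
  exact LinearMap.range_add_le _ _

theorem range_mulVecLin_le_and_disjoint_of_rank_add [Finite m] {B C : Matrix m n K}
    (h : (B + C).rank = B.rank + C.rank) :
    range B.mulVecLin ≤ range (B + C).mulVecLin ∧
      Disjoint (range B.mulVecLin) (range C.mulVecLin) := by
  obtain ⟨hsup, hdisj⟩ := Submodule.eq_sup_and_disjoint_of_finrank_eq_add
    (range_mulVecLin_add_le B C) h
  exact ⟨hsup ▸ le_sup_left, hdisj⟩

theorem mul_mul_eq_of_range_mulVecLin_le [Fintype m] {A B : Matrix m n K} {G : Matrix n m K}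
    (hG : A * G * A = A) (hB : range B.mulVecLin ≤ range A.mulVecLin) : A * G * B = B := by
  refine ext_iff_mulVec.2 fun v ↦ ?_
  obtain ⟨w, hw⟩ := hB ⟨v, rfl⟩
  simp only [mulVecLin_apply] at hw
  rw [← mulVec_mulVec, ← hw, mulVec_mulVec, hG]

theorem eq_zero_of_range_mulVecLin_le_of_disjoint [Fintype p] {B C : Matrix m n K}
    {X : Matrix m p K} (hdisj : Disjoint (range B.mulVecLin) (range C.mulVecLin))
    (hB : range X.mulVecLin ≤ range B.mulVecLin) (hC : range X.mulVecLin ≤ range C.mulVecLin) :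
    X = 0 := by
  have hX : X.mulVecLin = 0 := LinearMap.range_eq_bot.1 (disjoint_self.1 (hdisj.mono hB hC))
  exact ext_iff_mulVec.2 fun v ↦ by simpa using LinearMap.congr_fun hX v

theorem mul_mul_self_eq_of_rank_add [Fintype m] {B C : Matrix m n K} {G : Matrix n m K}
    (h : (B + C).rank = B.rank + C.rank) (hG : (B + C) * G * (B + C) = B + C) :
    B * G * B = B := by
  obtain ⟨hle, hdisj⟩ := range_mulVecLin_le_and_disjoint_of_rank_add h
  have hAGB : (B + C) * G * B = B := mul_mul_eq_of_range_mulVecLin_le hG hle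
  have hCGB_eq : C * G * B = B - B * G * B := by
    rw [eq_sub_iff_add_eq, add_comm, ← Matrix.add_mul, ← Matrix.add_mul, hAGB]
  have hCGB : C * G * B = 0 := by
    refine eq_zero_of_range_mulVecLin_le_of_disjoint hdisj ?_ ?_
    · rintro _ ⟨v, rfl⟩
      exact ⟨v - G *ᵥ B *ᵥ v, by simp [hCGB_eq, mulVec_sub, mulVec_mulVec]⟩
    · rintro _ ⟨v, rfl⟩
      exact ⟨G *ᵥ B *ᵥ v, by simp [mulVec_mulVec, Matrix.mul_assoc]⟩
  calc B * G * B = B - C * G * B := by rw [hCGB_eq, sub_sub_cancel]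
    _ = B := by rw [hCGB, sub_zero]

end Matrix

theorem Matrix.PosSemidef.exists_posSemidef_mul_mul_eq_self {𝕜 n : Type*} [RCLike 𝕜] [Fintype n]
    [DecidableEq n] {A : Matrix n n 𝕜} (hA : A.PosSemidef) :
    ∃ G : Matrix n n 𝕜, G.PosSemidef ∧ A * G * A = A := by
  have hA' : IsSelfAdjoint A := hA.1
  have hcont (f : ℝ → ℝ) : ContinuousOn f (spectrum ℝ A) := A.finite_real_spectrum.continuousOn f
  -- Since `0⁻¹ = 0` in `ℝ`, this is the Moore–Penrose inverse of `A`.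
  refine ⟨cfc (·⁻¹ : ℝ → ℝ) A, ?_, ?_⟩
  · exact nonneg_iff_posSemidef.1 <|
      cfc_nonneg fun x hx ↦ inv_nonneg.2 (spectrum_nonneg_of_nonneg hA.nonneg hx)
  · calc A * cfc (·⁻¹ : ℝ → ℝ) A * A = cfc (fun x : ℝ ↦ x * x⁻¹ * x) A := by
          rw [cfc_mul _ _ A (hcont _) (hcont _), cfc_mul _ _ A (hcont _) (hcont _), cfc_id' ℝ A]
      _ = A := by simp only [mul_inv_mul_cancel, cfc_id' ℝ A]

theorem Matrix.PosSemidef.of_rank_add {𝕜 n : Type*} [RCLike 𝕜] [Fintype n] [DecidableEq n]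
    {B C : Matrix n n 𝕜} (hB : B.IsHermitian) (hBC : (B + C).PosSemidef)
    (hrank : (B + C).rank = B.rank + C.rank) : B.PosSemidef := by
  obtain ⟨G, hG, hAGA⟩ := hBC.exists_posSemidef_mul_mul_eq_self
  have hBGB := hG.conjTranspose_mul_mul_same B
  rwa [hB.eq, mul_mul_self_eq_of_rank_add hrank hAGA] at hBGB

/-- If A = B + C with B, C Hermitian, rank A = rank B + rank C, and A ⪰ 0,
then B ⪰ 0 and C ⪰ 0. -/
theorem posSemidef_of_rank_add (n : ℕ) (A B C : Matrix (Fin n) (Fin n) ℂ)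
    (hB : B.IsHermitian) (hC : C.IsHermitian) (hABC : A = B + C)
    (hrank : A.rank = B.rank + C.rank) (hA : A.PosSemidef) :
    B.PosSemidef ∧ C.PosSemidef := by
  subst hABC
  refine ⟨hA.of_rank_add hB hrank, ?_⟩
  rw [add_comm] at hA hrank
  exact hA.of_rank_add hC (hrank.trans (add_comm _ _))
end

section
/- For a positive semidefinite operator ρ on H_A ⊗ H_B with positive semidefinite partial transpose, if a product vector |a⟩⊗|b⟩ lies in the kernel of ρ, then |a*⟩⊗|b⟩ lies in the kernel of ρ^Γ, where |a*⟩ is the componentwise complex conjugate of |a⟩ in the fixed basis of H_A. -/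
open Matrix
open scoped ComplexOrder

theorem Matrix.dotProduct_mulVec_eq_sum_prod {R m n : Type*} [NonUnitalSemiring R]
    [Fintype m] [Fintype n] (u : m → R) (A : Matrix m n R) (v : n → R) :
    u ⬝ᵥ A *ᵥ v = ∑ z : m × n, u z.1 * A z.1 z.2 * v z.2 := by
  simp only [dotProduct, mulVec, Finset.mul_sum, mul_assoc, Fintype.sum_prod_type]

theorem star_dotProduct_ptranspose_mulVec_partialConj {M N : ℕ}
    (ρ : Matrix (Fin M × Fin N) (Fin M × Fin N) ℂ) (a : Fin M → ℂ) (b : Fin N → ℂ) :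
    star (fun p : Fin M × Fin N => star (a p.1) * b p.2) ⬝ᵥ
        ptranspose ρ *ᵥ (fun p => star (a p.1) * b p.2) =
      star (fun p : Fin M × Fin N => a p.1 * b p.2) ⬝ᵥ ρ *ᵥ (fun p => a p.1 * b p.2) := by
  -- exchanging the A-indices of the bra and the ket turns one expansion into the other
  let swapA : Equiv.Perm ((Fin M × Fin N) × (Fin M × Fin N)) :=
    ⟨fun z => ((z.2.1, z.1.2), (z.1.1, z.2.2)), fun z => ((z.2.1, z.1.2), (z.1.1, z.2.2)),
      fun _ => rfl, fun _ => rfl⟩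
  rw [dotProduct_mulVec_eq_sum_prod, dotProduct_mulVec_eq_sum_prod]
  refine Fintype.sum_equiv swapA _ _ fun z => ?_
  simp only [swapA, Equiv.coe_fn_mk, ptranspose, of_apply, Pi.star_apply, star_mul', star_star]
  ring

theorem partialConj_mem_ker_ptranspose_general (M N : ℕ)
    (ρ : Matrix (Fin M × Fin N) (Fin M × Fin N) ℂ)
    (hρΓ : (ptranspose ρ).PosSemidef)
    (a : Fin M → ℂ) (b : Fin N → ℂ)
    (hker : ρ.mulVec (fun p => a p.1 * b p.2) = 0) :
    (ptranspose ρ).mulVec (fun p => star (a p.1) * b p.2) = 0 := by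
  rw [← hρΓ.dotProduct_mulVec_zero_iff, star_dotProduct_ptranspose_mulVec_partialConj, hker,
    dotProduct_zero]

/-- For a PPT state ρ, if |a,b⟩ ∈ ker ρ then |a*,b⟩ ∈ ker ρ^Γ. -/
theorem partialConj_mem_ker_ptranspose (M N : ℕ)
    (ρ : Matrix (Fin M × Fin N) (Fin M × Fin N) ℂ)
    (hρ : ρ.PosSemidef) (hρΓ : (ptranspose ρ).PosSemidef)
    (a : Fin M → ℂ) (b : Fin N → ℂ)
    (hker : ρ.mulVec (fun p => a p.1 * b p.2) = 0) :
    (ptranspose ρ).mulVec (fun p => star (a p.1) * b p.2) = 0 :=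
  partialConj_mem_ker_ptranspose_general M N ρ hρΓ a b hker
end

section
/- (Dimension-counting necessary condition for extremality.) Let ρ be a PPT state on H_A ⊗ H_B with dim H_A = M, dim H_B = N, rank ρ = r and rank ρ^Γ = s. If r² + s² > M²N² + 1, then there exists a Hermitian matrix H, not a scalar multiple of ρ, with range(H) ⊆ range(ρ) and range(H^Γ) ⊆ range(ρ^Γ); consequently ρ is not extreme among PPT states. -/
open Matrix
open scoped ComplexOrder

/-!
The Hermitian matrices with range in `range ρ` span a complex space of dimension `r²`, and those
whose partial transpose has range in `range ρ^Γ` span one of dimension `s²`. Both spaces are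
closed under `ᴴ`, and inside the `M²N²`-dimensional matrix space they meet in dimension at least
`r² + s² - M²N² ≥ 2`. So the intersection contains an element outside `ℂ ρ`, and then its real
or its imaginary part is a Hermitian `H ∉ ℂ ρ` in the intersection.

Range inclusion makes `t ρ ± H` and `t ρ^Γ ± H^Γ` positive semidefinite for large `t`: `ρ`
dominates a positive multiple of its support projection `P`, and `H = P H P`. Hence
`ρ = (ρ/2 + H/2t) + (ρ/2 - H/2t)` is a sum of two non-proportional PPT states.
-/

open Module Filter Topology Unitary
open scoped ComplexStarModule

lemma Matrix.exists_mul_eq_of_range_le {R l m n : Type*} [CommRing R] [Fintype n]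
    [Fintype l] [DecidableEq l] {A : Matrix m n R} {B : Matrix m l R}
    (h : LinearMap.range B.mulVecLin ≤ LinearMap.range A.mulVecLin) :
    ∃ X : Matrix n l R, B = A * X := by
  choose w hw using fun j => h (LinearMap.mem_range_self B.mulVecLin (Pi.single j 1))
  refine ⟨(of w)ᵀ, ?_⟩
  ext i j
  have := congrFun (hw j) i
  simp only [mulVecLin_apply, mulVec_single_one] at this
  simpa [Matrix.mul_apply, mulVec, dotProduct] using this.symm

section SelfAdjoint

variable {A : Type*} [AddCommGroup A] [Module ℂ A] [StarAddMonoid A] [StarModule ℂ A]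

lemma Submodule.exists_isSelfAdjoint_mem_notMem {W S : Submodule ℂ A}
    (hW : ∀ a ∈ W, star a ∈ W) (h : ¬ W ≤ S) : ∃ a ∈ W, IsSelfAdjoint a ∧ a ∉ S := by
  obtain ⟨a, haW, haS⟩ := SetLike.not_le_iff_exists.1 h
  by_contra! hS
  have hre : (ℜ a : A) ∈ S := hS _ (by
    rw [realPart_apply_coe]
    exact W.smul_of_tower_mem _ (W.add_mem haW (hW a haW))) (ℜ a).2
  have him : (ℑ a : A) ∈ S := hS _ (by
    rw [imaginaryPart_apply_coe]
    exact W.smul_mem _ (W.smul_of_tower_mem _ (W.sub_mem haW (hW a haW)))) (ℑ a).2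
  exact haS (realPart_add_I_smul_imaginaryPart a ▸ S.add_mem hre (S.smul_mem _ him))

end SelfAdjoint

lemma LinearIndependent.not_exists_smul_add_eq_smul_sub {K E : Type*} [Field K] [CharZero K]
    [AddCommGroup E] [Module K E] {x y : E}
    (h : LinearIndependent K ![x, y]) {p q : K} (hp : p ≠ 0) (hq : q ≠ 0) :
    ¬ ∃ c : K, p • x + q • y = c • (p • x - q • y) := by
  rintro ⟨c, hc⟩
  obtain ⟨h1, h2⟩ := LinearIndependent.pair_iff.1 h ((1 - c) * p) ((1 + c) * q) (by
    linear_combination (norm := module) hc)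
  have h1 : 1 - c = 0 := (mul_eq_zero.1 h1).resolve_right hp
  have h2 : 1 + c = 0 := (mul_eq_zero.1 h2).resolve_right hq
  have : (2 : K) = 0 := by linear_combination h1 + h2
  exact two_ne_zero this

namespace Matrix

section Positivity

variable {𝕜 n : Type*} [RCLike 𝕜] [Fintype n] [DecidableEq n]

lemma posSemidef_conjStarAlgAut_diagonal (U : unitary (Matrix n n 𝕜)) {d : n → ℝ} (hd : 0 ≤ d) :
    (conjStarAlgAut 𝕜 _ U (diagonal (RCLike.ofReal ∘ d))).PosSemidef := by
  rw [conjStarAlgAut_apply, isUnit_coe.posSemidef_star_right_conjugate_iff]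
  exact posSemidef_diagonal_iff.2 fun i => RCLike.ofReal_nonneg.2 (hd i)

lemma IsHermitian.eventually_posSemidef_smul_one_sub {K : Matrix n n 𝕜} (hK : K.IsHermitian) :
    ∀ᶠ c : ℝ in atTop, ((c : 𝕜) • 1 - K).PosSemidef := by
  filter_upwards [eventually_all.2 fun i => eventually_ge_atTop (hK.eigenvalues i)] with c hc
  have hdiag : diagonal (RCLike.ofReal ∘ (fun i => c - hK.eigenvalues i)) =
      (c : 𝕜) • (1 : Matrix n n 𝕜) - diagonal (RCLike.ofReal ∘ hK.eigenvalues) := by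
    ext i j
    rcases eq_or_ne i j with rfl | hij <;> simp [*, Algebra.algebraMap_eq_smul_one, sub_smul]
  have := posSemidef_conjStarAlgAut_diagonal hK.eigenvectorUnitary
    (d := fun i => c - hK.eigenvalues i) fun i => sub_nonneg.2 (hc i)
  rwa [hdiag, map_sub, map_smul, map_one, ← hK.spectral_theorem] at this

lemma PosSemidef.exists_smul_mul_conjTranspose_le {ρ : Matrix n n 𝕜} (hρ : ρ.PosSemidef) :
    ∃ (P : Matrix n n 𝕜) (m : ℝ), 0 < m ∧ P * ρ = ρ ∧ (ρ - (m : 𝕜) • (P * Pᴴ)).PosSemidef := by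
  -- `P` is the spectral projection onto the range of `ρ`, `m` its least nonzero eigenvalue.
  set μ := hρ.1.eigenvalues
  set e := conjStarAlgAut 𝕜 (Matrix n n 𝕜) hρ.1.eigenvectorUnitary
  have hbound : ∀ k, ∀ᶠ m in 𝓝[>] (0 : ℝ), μ k ≠ 0 → m ≤ μ k := fun k => by
    rcases (hρ.eigenvalues_nonneg k).eq_or_lt with h | h
    · exact .of_forall fun _ h' => absurd h.symm h'
    · exact ((eventually_le_nhds h).filter_mono nhdsWithin_le_nhds).mono fun _ h _ => h
  obtain ⟨m, hm, hm0⟩ := ((eventually_all.2 hbound).and self_mem_nhdsWithin).exists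
  set p : n → ℝ := fun k => if μ k = 0 then 0 else 1
  have hρe : ρ = e (diagonal (RCLike.ofReal ∘ μ)) := hρ.1.spectral_theorem
  refine ⟨e (diagonal (RCLike.ofReal ∘ p)), m, hm0, ?_, ?_⟩
  · rw [hρe, ← map_mul, diagonal_mul_diagonal]
    congr 2
    ext k
    by_cases hk : μ k = 0 <;> simp [p, hk]
  · have hsplit :
        ρ - (m : 𝕜) • (e (diagonal (RCLike.ofReal ∘ p)) * (e (diagonal (RCLike.ofReal ∘ p)))ᴴ) =
          e (diagonal (RCLike.ofReal ∘ fun k => μ k - m * p k)) := by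
      rw [← star_eq_conjTranspose, ← map_star, ← map_mul, ← map_smul, hρe, ← map_sub]
      congr 1
      ext i j
      rcases eq_or_ne i j with rfl | hij
      · by_cases hk : μ i = 0 <;> simp [p, hk, Algebra.algebraMap_eq_smul_one, sub_smul]
      · simp [hij, hij.symm]
    rw [hsplit]
    refine posSemidef_conjStarAlgAut_diagonal _ fun k => ?_
    by_cases hk : μ k = 0
    · simp [p, hk]
    · simpa [p, hk] using hm k hk

lemma PosSemidef.eventually_posSemidef_smul_sub {ρ H : Matrix n n 𝕜} (hρ : ρ.PosSemidef)
    (hH : H.IsHermitian) (hHρ : LinearMap.range H.mulVecLin ≤ LinearMap.range ρ.mulVecLin) :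
    ∀ᶠ t : ℝ in atTop, ((t : 𝕜) • ρ - H).PosSemidef := by
  obtain ⟨X, hX⟩ := exists_mul_eq_of_range_le hHρ
  obtain ⟨P, m, hm, hPρ, hρP⟩ := hρ.exists_smul_mul_conjTranspose_le
  have hPH : P * H = H := by rw [hX, ← Matrix.mul_assoc, hPρ]
  have hHP : H * Pᴴ = H := by
    rw [← hH.eq, ← conjTranspose_mul, hPH, hH.eq]
  filter_upwards
    [(tendsto_id.atTop_mul_const hm).eventually hH.eventually_posSemidef_smul_one_sub,
    eventually_ge_atTop 0] with t ht ht0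
  have hsplit : (t : 𝕜) • ρ - H =
      (t : 𝕜) • (ρ - (m : 𝕜) • (P * Pᴴ)) + P * (((t * m : ℝ) : 𝕜) • 1 - H) * Pᴴ := by
    rw [Matrix.mul_sub, Matrix.sub_mul, hPH, hHP, Matrix.mul_smul, Matrix.smul_mul, Matrix.mul_one]
    push_cast
    module
  rw [hsplit]
  exact (hρP.smul (RCLike.ofReal_nonneg.2 ht0)).add (ht.mul_mul_conjTranspose_same P)

end Positivity

section Support

variable {𝕜 n : Type*} [Field 𝕜] [StarRing 𝕜] [Fintype n]

/-- Over `ℂ` this is the complex span of the Hermitian matrices with range in `V`; counting its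
complex dimension replaces the count of real dimensions of spaces of Hermitian matrices. -/
def supportedOn (V : Submodule 𝕜 (n → 𝕜)) : Submodule 𝕜 (Matrix n n 𝕜) where
  carrier := {A | (∀ x, A *ᵥ x ∈ V) ∧ ∀ x, Aᴴ *ᵥ x ∈ V}
  add_mem' hA hB := by
    simp only [Set.mem_ofPred_eq, conjTranspose_add, add_mulVec] at *
    exact ⟨fun x => V.add_mem (hA.1 x) (hB.1 x), fun x => V.add_mem (hA.2 x) (hB.2 x)⟩
  zero_mem' := by simp
  smul_mem' c A hA := by
    simp only [Set.mem_ofPred_eq, conjTranspose_smul, smul_mulVec] at *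
    exact ⟨fun x => V.smul_mem _ (hA.1 x), fun x => V.smul_mem _ (hA.2 x)⟩

lemma mem_supportedOn {V : Submodule 𝕜 (n → 𝕜)} {A : Matrix n n 𝕜} :
    A ∈ supportedOn V ↔ LinearMap.range A.mulVecLin ≤ V ∧ LinearMap.range Aᴴ.mulVecLin ≤ V := by
  simp only [LinearMap.range_le_iff_comap, Submodule.eq_top_iff', Submodule.mem_comap,
    mulVecLin_apply]
  rfl

lemma conjTranspose_mem_supportedOn {V : Submodule 𝕜 (n → 𝕜)} {A : Matrix n n 𝕜}
    (hA : A ∈ supportedOn V) : Aᴴ ∈ supportedOn V := by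
  rw [mem_supportedOn] at hA ⊢
  rw [conjTranspose_conjTranspose]
  exact hA.symm

lemma IsHermitian.mem_supportedOn_iff {V : Submodule 𝕜 (n → 𝕜)} {A : Matrix n n 𝕜}
    (hA : A.IsHermitian) : A ∈ supportedOn V ↔ LinearMap.range A.mulVecLin ≤ V := by
  rw [mem_supportedOn, hA.eq, and_self]

lemma sq_finrank_le_finrank_supportedOn [DecidableEq n] (V : Submodule 𝕜 (n → 𝕜)) :
    finrank 𝕜 V ^ 2 ≤ finrank 𝕜 (supportedOn V) := by
  set r := finrank 𝕜 V
  let ι : (Fin r → 𝕜) →ₗ[𝕜] n → 𝕜 := V.subtype ∘ₗ (finBasis 𝕜 V).equivFun.symm.toLinearMap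
  obtain ⟨g, hg⟩ := ι.exists_leftInverse_of_injective
    (LinearMap.ker_eq_bot.2 (V.injective_subtype.comp (LinearEquiv.injective _)))
  set B := LinearMap.toMatrix' ι
  set L := LinearMap.toMatrix' g
  have hLB : L * B = 1 := by rw [← LinearMap.toMatrix'_comp, hg, LinearMap.toMatrix'_id]
  have hB : LinearMap.range B.mulVecLin = V := by
    rw [← Matrix.toLin'_apply', Matrix.toLin'_toMatrix', LinearMap.range_comp, LinearEquiv.range,
      Submodule.map_top, Submodule.range_subtype]
  let Φ := mulLeftLinearMap n 𝕜 B ∘ₗ mulRightLinearMap (Fin r) 𝕜 Bᴴ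
  have hLΦ : ∀ X, L * Φ X * Lᴴ = X := fun X => by
    calc L * Φ X * Lᴴ = (L * B) * X * (L * B)ᴴ := by
          simp [Φ, Matrix.mul_assoc, conjTranspose_mul]
      _ = X := by simp [hLB]
  have hΦ : Function.Injective Φ := fun X Y hXY => by rw [← hLΦ X, hXY, hLΦ]
  have hrange : LinearMap.range Φ ≤ supportedOn V := by
    rintro _ ⟨X, rfl⟩
    simp only [Φ, LinearMap.comp_apply, mulRightLinearMap_apply, mulLeftLinearMap_apply,
      mem_supportedOn, conjTranspose_mul, conjTranspose_conjTranspose, ← hB, Matrix.mul_assoc]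
    exact ⟨by rw [mulVecLin_mul]; exact LinearMap.range_comp_le_range _ _,
      by rw [mulVecLin_mul]; exact LinearMap.range_comp_le_range _ _⟩
  calc r ^ 2 = finrank 𝕜 (Matrix (Fin r) (Fin r) 𝕜) := by simp [finrank_matrix, sq]
    _ = finrank 𝕜 (LinearMap.range Φ) := (LinearMap.finrank_range_of_inj hΦ).symm
    _ ≤ finrank 𝕜 (supportedOn V) := Submodule.finrank_mono hrange

end Support

end Matrix

section PartialTranspose

variable {M N : ℕ}

lemma ptranspose_ptranspose (A : Matrix (Fin M × Fin N) (Fin M × Fin N) ℂ) :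
    ptranspose (ptranspose A) = A :=
  rfl

lemma conjTranspose_ptranspose (A : Matrix (Fin M × Fin N) (Fin M × Fin N) ℂ) :
    (ptranspose A)ᴴ = ptranspose Aᴴ :=
  rfl

lemma Matrix.IsHermitian.ptranspose {A : Matrix (Fin M × Fin N) (Fin M × Fin N) ℂ}
    (hA : A.IsHermitian) : (ptranspose A).IsHermitian := by
  rw [IsHermitian, conjTranspose_ptranspose, hA.eq]

variable (M N) in
noncomputable def ptransposeEquiv :
    Matrix (Fin M × Fin N) (Fin M × Fin N) ℂ ≃ₗ[ℂ] Matrix (Fin M × Fin N) (Fin M × Fin N) ℂ where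
  toFun := ptranspose
  invFun := ptranspose
  map_add' _ _ := rfl
  map_smul' _ _ := rfl
  left_inv := ptranspose_ptranspose
  right_inv := ptranspose_ptranspose

lemma ptransposeEquiv_apply (A : Matrix (Fin M × Fin N) (Fin M × Fin N) ℂ) :
    ptransposeEquiv M N A = ptranspose A :=
  rfl

lemma exists_isHermitian_notMem_span (V V' : Submodule ℂ (Fin M × Fin N → ℂ))
    (ρ : Matrix (Fin M × Fin N) (Fin M × Fin N) ℂ)
    (hdim : M ^ 2 * N ^ 2 + 1 < finrank ℂ V ^ 2 + finrank ℂ V' ^ 2) :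
    ∃ H : Matrix (Fin M × Fin N) (Fin M × Fin N) ℂ, H.IsHermitian ∧ H ∉ Submodule.span ℂ {ρ} ∧
      LinearMap.range H.mulVecLin ≤ V ∧ LinearMap.range (ptranspose H).mulVecLin ≤ V' := by
  have hY : finrank ℂ V ^ 2 ≤ finrank ℂ (supportedOn V) := sq_finrank_le_finrank_supportedOn V
  have hZ : finrank ℂ V' ^ 2 ≤
      finrank ℂ ((supportedOn V').comap (ptransposeEquiv M N).toLinearMap) := by
    rw [Submodule.comap_equiv_eq_map_symm, LinearEquiv.finrank_map_eq]
    exact sq_finrank_le_finrank_supportedOn V'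
  set Y := supportedOn V
  set Z := (supportedOn V').comap (ptransposeEquiv M N).toLinearMap
  have hsup : finrank ℂ ↥(Y ⊔ Z) ≤ M ^ 2 * N ^ 2 := by
    refine (Submodule.finrank_le _).trans_eq ?_
    simp only [finrank_matrix, Fintype.card_prod, Fintype.card_fin, finrank_self, mul_one]
    ring
  have hinf := Submodule.finrank_sup_add_finrank_inf_eq Y Z
  have hnot : ¬ Y ⊓ Z ≤ Submodule.span ℂ {ρ} := fun hle => by
    have := (Submodule.finrank_mono hle).trans (finrank_span_le_card ({ρ} : Set _))
    simp only [Set.toFinset_singleton, Finset.card_singleton] at this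
    omega
  have hstar : ∀ A ∈ Y ⊓ Z, star A ∈ Y ⊓ Z := fun A ⟨hAY, hAZ⟩ =>
    ⟨conjTranspose_mem_supportedOn hAY, show ptranspose Aᴴ ∈ supportedOn V' from
      conjTranspose_ptranspose A ▸ conjTranspose_mem_supportedOn hAZ⟩
  obtain ⟨H, ⟨hHY, hHZ⟩, hH, hHρ⟩ := Submodule.exists_isSelfAdjoint_mem_notMem hstar hnot
  replace hH : H.IsHermitian := hH
  exact ⟨H, hH, hHρ, hH.mem_supportedOn_iff.1 hHY, hH.ptranspose.mem_supportedOn_iff.1 hHZ⟩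

def IsPPT (ρ : Matrix (Fin M × Fin N) (Fin M × Fin N) ℂ) : Prop :=
  ρ.PosSemidef ∧ (ptranspose ρ).PosSemidef

lemma IsPPT.smul {ρ : Matrix (Fin M × Fin N) (Fin M × Fin N) ℂ} (hρ : IsPPT ρ) {c : ℂ}
    (hc : 0 ≤ c) : IsPPT (c • ρ) :=
  ⟨hρ.1.smul hc, by simpa only [← ptransposeEquiv_apply, map_smul] using hρ.2.smul hc⟩

lemma IsPPT.eventually_isPPT_smul_sub {ρ H : Matrix (Fin M × Fin N) (Fin M × Fin N) ℂ}
    (hρ : IsPPT ρ) (hH : H.IsHermitian)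
    (hran : LinearMap.range H.mulVecLin ≤ LinearMap.range ρ.mulVecLin)
    (hranΓ : LinearMap.range (ptranspose H).mulVecLin ≤
      LinearMap.range (ptranspose ρ).mulVecLin) :
    ∀ᶠ t : ℝ in atTop, IsPPT ((t : ℂ) • ρ - H) := by
  filter_upwards [hρ.1.eventually_posSemidef_smul_sub hH hran,
    hρ.2.eventually_posSemidef_smul_sub hH.ptranspose hranΓ] with t h hΓ
  rw [← ptransposeEquiv_apply, ← ptransposeEquiv_apply, ← map_smul, ← map_sub] at hΓ
  exact ⟨h, hΓ⟩

lemma IsPPT.exists_nonproportional_decomposition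
    {ρ H : Matrix (Fin M × Fin N) (Fin M × Fin N) ℂ} (hρ : IsPPT ρ)
    (hind : LinearIndependent ℂ ![ρ, H]) (hH : H.IsHermitian)
    (hran : LinearMap.range H.mulVecLin ≤ LinearMap.range ρ.mulVecLin)
    (hranΓ : LinearMap.range (ptranspose H).mulVecLin ≤
      LinearMap.range (ptranspose ρ).mulVecLin) :
    ∃ ρ₁ ρ₂, ρ₁ ≠ 0 ∧ IsPPT ρ₁ ∧ ρ₂ ≠ 0 ∧ IsPPT ρ₂ ∧ ρ = ρ₁ + ρ₂ ∧ ¬ ∃ c : ℂ, ρ₁ = c • ρ₂ := by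
  have hrange_neg : ∀ A : Matrix (Fin M × Fin N) (Fin M × Fin N) ℂ,
      LinearMap.range (-A).mulVecLin = LinearMap.range A.mulVecLin := fun A => by
    rw [← toLin'_apply', map_neg, LinearMap.range_neg, toLin'_apply']
  obtain ⟨t, ⟨hsub, hadd⟩, ht⟩ := ((hρ.eventually_isPPT_smul_sub hH hran hranΓ).and
    (hρ.eventually_isPPT_smul_sub hH.neg ((hrange_neg H).trans_le hran)
      (by rw [← ptransposeEquiv_apply, map_neg, hrange_neg]; exact hranΓ))).and
    (eventually_gt_atTop 0) |>.exists
  set ε : ℂ := (((2 * t)⁻¹ : ℝ) : ℂ)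
  have hε : ε ≠ 0 := by simp [ε, ht.ne']
  have hε0 : 0 ≤ ε := RCLike.ofReal_nonneg.2 (inv_nonneg.2 (by linarith))
  have hεt : ε * t = 2⁻¹ := by
    simp only [ε]
    push_cast
    field_simp
  refine ⟨2⁻¹ • ρ + ε • H, 2⁻¹ • ρ - ε • H, ?_, ?_, ?_, ?_, by module,
    hind.not_exists_smul_add_eq_smul_sub (by norm_num) hε⟩
  · exact fun h0 => hε (LinearIndependent.pair_iff.1 hind _ _ h0).2
  · convert hadd.smul hε0 using 1
    rw [sub_neg_eq_add, smul_add, smul_smul, hεt]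
  · rw [sub_eq_add_neg, ← neg_smul]
    exact fun h0 => hε (neg_eq_zero.1 (LinearIndependent.pair_iff.1 hind _ _ h0).2)
  · convert hsub.smul hε0 using 1
    rw [smul_sub, smul_smul, hεt]

end PartialTranspose

/-- Necessary condition for extremality: if ρ is a PPT state of birank (r,s)
with r² + s² > M²N² + 1, then there is a Hermitian H, not proportional to ρ,
with range H ⊆ range ρ and range H^Γ ⊆ range ρ^Γ; consequently ρ is not
extreme, i.e. ρ is a sum of two non-proportional PPT states. -/
theorem not_extreme_of_birank_large (M N : ℕ)
    (ρ : Matrix (Fin M × Fin N) (Fin M × Fin N) ℂ)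
    (hρ0 : ρ ≠ 0) (hρ : ρ.PosSemidef) (hρΓ : (ptranspose ρ).PosSemidef)
    (r s : ℕ) (hr : ρ.rank = r) (hs : (ptranspose ρ).rank = s)
    (hbig : M ^ 2 * N ^ 2 + 1 < r ^ 2 + s ^ 2) :
    (∃ H : Matrix (Fin M × Fin N) (Fin M × Fin N) ℂ,
      H.IsHermitian ∧ (¬ ∃ c : ℂ, H = c • ρ) ∧
      LinearMap.range H.mulVecLin ≤ LinearMap.range ρ.mulVecLin ∧
      LinearMap.range (ptranspose H).mulVecLin ≤
        LinearMap.range (ptranspose ρ).mulVecLin) ∧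
    ∃ ρ₁ ρ₂ : Matrix (Fin M × Fin N) (Fin M × Fin N) ℂ,
      ρ₁ ≠ 0 ∧ ρ₁.PosSemidef ∧ (ptranspose ρ₁).PosSemidef ∧
      ρ₂ ≠ 0 ∧ ρ₂.PosSemidef ∧ (ptranspose ρ₂).PosSemidef ∧
      ρ = ρ₁ + ρ₂ ∧ ¬ ∃ c : ℂ, ρ₁ = c • ρ₂ := by
  subst hr hs
  obtain ⟨H, hH, hHρ, hran, hranΓ⟩ := exists_isHermitian_notMem_span _ _ ρ hbig
  rw [Submodule.mem_span_singleton] at hHρ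
  have hind : LinearIndependent ℂ ![ρ, H] :=
    (LinearIndependent.pair_iff' hρ0).2 fun a h => hHρ ⟨a, h⟩
  refine ⟨⟨H, hH, fun ⟨c, hc⟩ => hHρ ⟨c, hc.symm⟩, hran, hranΓ⟩, ?_⟩
  obtain ⟨ρ₁, ρ₂, h₁, hP₁, h₂, hP₂, hsum, hprop⟩ :=
    IsPPT.exists_nonproportional_decomposition ⟨hρ, hρΓ⟩ hind hH hran hranΓ
  exact ⟨ρ₁, ρ₂, h₁, hP₁.1, hP₁.2, h₂, hP₂.1, hP₂.2, hsum, hprop⟩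
end

section
/- If ρ is a pure PPT state on H_A ⊗ H_B (i.e., ρ = |ψ⟩⟨ψ| with ρ^Γ positive semidefinite), then |ψ⟩ is a product vector; hence the extreme points of rank one of the set of PPT states are exactly the pure product states. -/
open Matrix
open scoped ComplexOrder

/-- The set of (normalized) PPT states. -/
def pptStates (M N : ℕ) : Set (Matrix (Fin M × Fin N) (Fin M × Fin N) ℂ) :=
  {ρ | ρ.PosSemidef ∧ (ptranspose ρ).PosSemidef ∧ ρ.trace = 1}

/-!
View `ψ` as an `M × N` coefficient matrix `Ψ`. Testing `ρ^Γ ≥ 0` on the span of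
`e_i ⊗ f_j, e_i ⊗ f_l, e_k ⊗ f_j, e_k ⊗ f_l` against a suitable vector yields
`-2 |Ψ_ij Ψ_kl - Ψ_il Ψ_kj|² ≥ 0`, so all `2 × 2` minors of `Ψ` vanish and `ψ` is a product vector.

For the extreme points: a rank-one density matrix is `|φ⟩⟨φ|`, and `ρ` is PPT exactly when `φ` is
a product vector. Conversely, `|v⟩⟨v|` is extreme among any set of density matrices, since a
positive summand of `|v⟩⟨v|` annihilates `v^⊥` and hence is a multiple of `|v⟩⟨v|`.
-/

namespace Matrix

section Field

variable {m n K : Type*} [Fintype n] [Field K]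

theorem exists_eq_vecMulVec_of_rank_le_one [Fintype m] {A : Matrix m n K} (hA : A.rank ≤ 1) :
    ∃ u : m → K, ∃ w : n → K, A = vecMulVec u w := by
  rw [rank_eq_finrank_span_cols, finrank_le_one_iff] at hA
  obtain ⟨u, hu⟩ := hA
  choose w hw using fun j => hu ⟨A.col j, Submodule.subset_span (Set.mem_range_self j)⟩
  refine ⟨u, w, ext fun i j => ?_⟩
  simpa [vecMulVec_apply, mul_comm] using congrFun (congrArg Subtype.val (hw j)).symm i

theorem rank_pos_of_ne_zero {A : Matrix m n K} (hA : A ≠ 0) : 0 < A.rank := by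
  rw [Nat.pos_iff_ne_zero, rank, Ne, Submodule.finrank_eq_zero, LinearMap.range_eq_bot]
  intro h
  exact hA (ext_iff_mulVec.mpr fun v => by simpa using LinearMap.congr_fun h v)

end Field

section RCLike

variable {n 𝕜 : Type*} [Fintype n] [RCLike 𝕜]

theorem rank_vecMulVec_star_self {v : n → 𝕜} (hv : v ≠ 0) : (vecMulVec v (star v)).rank = 1 := by
  refine le_antisymm (rank_vecMulVec_le v (star v)) (rank_pos_of_ne_zero fun h => hv ?_)
  rw [← dotProduct_star_self_eq_zero, dotProduct_comm, ← trace_vecMulVec, h, trace_zero]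

theorem IsHermitian.exists_eq_vecMulVec_star_of_rank_le_one {A : Matrix n n 𝕜}
    (hA : A.IsHermitian) (hrk : A.rank ≤ 1) (htr : A.trace = 1) :
    ∃ φ : n → 𝕜, A = vecMulVec φ (star φ) := by
  obtain ⟨u, w, rfl⟩ := exists_eq_vecMulVec_of_rank_le_one hrk
  -- A rank-one matrix of trace one is idempotent, so the Hermitian `A` equals `Aᴴ * A`.
  have hidem : vecMulVec u w * vecMulVec u w = vecMulVec u w := by
    rw [vecMulVec_mul_vecMulVec, dotProduct_comm, ← trace_vecMulVec, htr, one_smul]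
  obtain ⟨r, hr0, hr⟩ := RCLike.nonneg_iff_exists_ofReal.mp (dotProduct_star_self_nonneg u)
  refine ⟨((√r : ℝ) : 𝕜) • star w, ?_⟩
  calc vecMulVec u w = (vecMulVec u w)ᴴ * vecMulVec u w := by rw [hA.eq, hidem]
    _ = vecMulVec (((√r : ℝ) : 𝕜) • star w) (star (((√r : ℝ) : 𝕜) • star w)) := by
      rw [conjTranspose_vecMulVec, vecMulVec_mul_vecMulVec, ← hr, star_smul, star_star,
        RCLike.star_def, RCLike.conj_ofReal, smul_vecMulVec, vecMulVec_smul, vecMulVec_smul,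
        smul_smul, ← RCLike.ofReal_mul, Real.mul_self_sqrt hr0]

theorem PosSemidef.mulVec_eq_zero_of_add_eq_vecMulVec {σ τ : Matrix n n 𝕜} (hσ : σ.PosSemidef)
    (hτ : τ.PosSemidef) {v x : n → 𝕜} (h : σ + τ = vecMulVec v (star v))
    (hx : star v ⬝ᵥ x = 0) : σ *ᵥ x = 0 := by
  have hsum : star x ⬝ᵥ (σ + τ) *ᵥ x = 0 := by simp [h, vecMulVec_mulVec, hx]
  rw [add_mulVec, dotProduct_add] at hsum
  rw [← hσ.dotProduct_mulVec_zero_iff]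
  exact ((add_eq_zero_iff_of_nonneg (hσ.dotProduct_mulVec_nonneg x)
    (hτ.dotProduct_mulVec_nonneg x)).mp hsum).1

theorem IsHermitian.exists_eq_smul_vecMulVec_of_mulVec_eq_zero {σ : Matrix n n 𝕜}
    (hσ : σ.IsHermitian) {v : n → 𝕜} (hv : star v ⬝ᵥ v = 1)
    (hker : ∀ x, star v ⬝ᵥ x = 0 → σ *ᵥ x = 0) :
    ∃ c : 𝕜, σ = c • vecMulVec v (star v) := by
  have hσP : σ * vecMulVec v (star v) = σ := ext_iff_mulVec.mpr fun x => by
    have h := hker (x - (star v ⬝ᵥ x) • v) (by rw [dotProduct_sub, dotProduct_smul, hv]; simp)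
    rw [mulVec_sub, sub_eq_zero] at h
    rw [← mulVec_mulVec, vecMulVec_mulVec, h, op_smul_eq_smul]
  have hPσ : vecMulVec v (star v) * σ = σ := by
    simpa [conjTranspose_mul, conjTranspose_vecMulVec, hσ.eq] using congrArg (·ᴴ) hσP
  refine ⟨star v ᵥ* σ ⬝ᵥ v, ?_⟩
  calc σ = vecMulVec v (star v) * σ * vecMulVec v (star v) := by rw [hPσ, hσP]
    _ = _ := by rw [vecMulVec_mul, vecMulVec_mul_vecMulVec, vecMulVec_smul]

theorem vecMulVec_star_mem_extremePoints {S : Set (Matrix n n 𝕜)}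
    (hS : ∀ σ ∈ S, σ.PosSemidef ∧ σ.trace = 1) {v : n → 𝕜} (hv : star v ⬝ᵥ v = 1)
    (hvS : vecMulVec v (star v) ∈ S) : vecMulVec v (star v) ∈ S.extremePoints ℝ := by
  refine ⟨hvS, fun σ hσS τ hτS ⟨s, t, hs, ht, _, hst⟩ => ?_⟩
  obtain ⟨hσ, hσtr⟩ := hS σ hσS
  have hker : ∀ x, star v ⬝ᵥ x = 0 → σ *ᵥ x = 0 := fun x hx => by
    have := (hσ.smul hs.le).mulVec_eq_zero_of_add_eq_vecMulVec ((hS τ hτS).1.smul ht.le) hst hx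
    rwa [smul_mulVec, smul_eq_zero, or_iff_right hs.ne'] at this
  obtain ⟨c, rfl⟩ := hσ.isHermitian.exists_eq_smul_vecMulVec_of_mulVec_eq_zero hv hker
  rw [trace_smul, trace_vecMulVec, dotProduct_comm, hv, smul_eq_mul, mul_one] at hσtr
  rw [hσtr, one_smul]

end RCLike

end Matrix

theorem exists_eq_mul_of_mul_eq_mul {m n K : Type*} [Field K] {ψ : m × n → K}
    (h : ∀ i k j l, ψ (i, j) * ψ (k, l) = ψ (i, l) * ψ (k, j)) :
    ∃ (a : m → K) (b : n → K), ψ = fun p => a p.1 * b p.2 := by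
  rcases eq_or_ne ψ 0 with rfl | hψ
  · exact ⟨0, 0, funext fun _ => (zero_mul _).symm⟩
  obtain ⟨⟨i₀, j₀⟩, hψ₀ : ψ (i₀, j₀) ≠ 0⟩ := Function.ne_iff.mp hψ
  refine ⟨fun i => ψ (i, j₀), fun j => ψ (i₀, j) / ψ (i₀, j₀), funext fun ⟨i, j⟩ => ?_⟩
  field_simp
  linear_combination h i i₀ j j₀

theorem ptranspose_vecMulVec_prod {M N : ℕ} (a : Fin M → ℂ) (b : Fin N → ℂ) :
    ptranspose (vecMulVec (fun p => a p.1 * b p.2) (star fun p => a p.1 * b p.2)) =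
      vecMulVec (fun p => star (a p.1) * b p.2) (star fun p => star (a p.1) * b p.2) := by
  ext p q
  simp only [ptranspose, of_apply, vecMulVec_apply, Pi.star_apply, star_mul', star_star]
  ring

theorem mul_eq_mul_of_posSemidef_ptranspose {M N : ℕ} {ψ : Fin M × Fin N → ℂ}
    (h : (ptranspose (vecMulVec ψ (star ψ))).PosSemidef) (i k : Fin M) (j l : Fin N) :
    ψ (i, j) * ψ (k, l) = ψ (i, l) * ψ (k, j) := by
  set z := ψ (i, j) * ψ (k, l) - ψ (i, l) * ψ (k, j)
  set e := ![(i, j), (i, l), (k, j), (k, l)]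
  -- Read as a matrix `X` on `{i, k} × {j, l}`, `x` makes `Ψᵀ X` antisymmetric, and the form of
  -- `ρ^Γ` at such an `X` is `-∑ |(Ψᵀ X)_jl|²`.
  set x := ![ψ (k, j), ψ (k, l), -ψ (i, j), -ψ (i, l)]
  have hform : star x ⬝ᵥ ((ptranspose (vecMulVec ψ (star ψ))).submatrix e e *ᵥ x) =
      -(star z * z + star z * z) := by
    simp [dotProduct, mulVec, Fin.sum_univ_four, ptranspose, vecMulVec_apply, e, x, z]
    ring
  have hneg := (h.submatrix e).dotProduct_mulVec_nonneg x
  rw [hform, neg_nonneg] at hneg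
  have hz₀ := star_mul_self_nonneg z
  have hz : star z * z = 0 := le_antisymm ((le_add_of_nonneg_left hz₀).trans hneg) hz₀
  exact sub_eq_zero.mp (by simpa using hz)

theorem vecMulVec_prod_mem_pptStates {M N : ℕ} {a : Fin M → ℂ} {b : Fin N → ℂ}
    (h : star (fun p : Fin M × Fin N => a p.1 * b p.2) ⬝ᵥ (fun p => a p.1 * b p.2) = 1) :
    vecMulVec (fun p => a p.1 * b p.2) (star fun p => a p.1 * b p.2) ∈ pptStates M N :=
  ⟨posSemidef_vecMulVec_self_star _,
    ptranspose_vecMulVec_prod a b ▸ posSemidef_vecMulVec_self_star _,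
    by rw [trace_vecMulVec, dotProduct_comm, h]⟩

theorem pure_ppt_is_product_general (M N : ℕ) (ψ : Fin M × Fin N → ℂ)
    (hppt : (ptranspose (Matrix.of fun p q => ψ p * star (ψ q))).PosSemidef) :
    (∃ (a : Fin M → ℂ) (b : Fin N → ℂ), ψ = fun p => a p.1 * b p.2) ∧
    ∀ ρ : Matrix (Fin M × Fin N) (Fin M × Fin N) ℂ,
      (ρ ∈ Set.extremePoints ℝ (pptStates M N) ∧ ρ.rank = 1) ↔
      ∃ (a : Fin M → ℂ) (b : Fin N → ℂ),
        (star (fun p : Fin M × Fin N => a p.1 * b p.2) ⬝ᵥ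
          fun p : Fin M × Fin N => a p.1 * b p.2) = 1 ∧
        ρ = Matrix.of fun p q => (a p.1 * b p.2) * star (a q.1 * b q.2) := by
  refine ⟨exists_eq_mul_of_mul_eq_mul (mul_eq_mul_of_posSemidef_ptranspose hppt),
    fun ρ => ⟨?_, ?_⟩⟩
  · rintro ⟨hext, hrk⟩
    obtain ⟨hρ, hρΓ, htr⟩ := hext.1
    obtain ⟨φ, rfl⟩ := hρ.isHermitian.exists_eq_vecMulVec_star_of_rank_le_one hrk.le htr
    obtain ⟨a, b, rfl⟩ := exists_eq_mul_of_mul_eq_mul (mul_eq_mul_of_posSemidef_ptranspose hρΓ)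
    exact ⟨a, b, by rwa [trace_vecMulVec, dotProduct_comm] at htr, rfl⟩
  · rintro ⟨a, b, hunit, rfl⟩
    have hne : (fun p : Fin M × Fin N => a p.1 * b p.2) ≠ 0 := fun h => by simp [h] at hunit
    exact ⟨vecMulVec_star_mem_extremePoints (fun σ hσ => ⟨hσ.1, hσ.2.2⟩) hunit
      (vecMulVec_prod_mem_pptStates hunit), rank_vecMulVec_star_self hne⟩

/-- A pure PPT state is a product state; hence the rank-one extreme points of
the set of PPT states are exactly the pure product states. -/
theorem pure_ppt_is_product (M N : ℕ) (ψ : Fin M × Fin N → ℂ)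
    (hunit : star ψ ⬝ᵥ ψ = 1)
    (hppt : (ptranspose (Matrix.of fun p q => ψ p * star (ψ q))).PosSemidef) :
    (∃ (a : Fin M → ℂ) (b : Fin N → ℂ), ψ = fun p => a p.1 * b p.2) ∧
    ∀ ρ : Matrix (Fin M × Fin N) (Fin M × Fin N) ℂ,
      (ρ ∈ Set.extremePoints ℝ (pptStates M N) ∧ ρ.rank = 1) ↔
      ∃ (a : Fin M → ℂ) (b : Fin N → ℂ),
        (star (fun p : Fin M × Fin N => a p.1 * b p.2) ⬝ᵥ
          fun p : Fin M × Fin N => a p.1 * b p.2) = 1 ∧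
        ρ = Matrix.of fun p q => (a p.1 * b p.2) * star (a q.1 * b q.2) :=
  pure_ppt_is_product_general M N ψ hppt
end

section
/- Let σ be a strongly extreme PPT state, i.e., there is no PPT state ρ ≠ λσ (for any λ>0) with range(ρ) = range(σ). Then: (i) any PPT state ρ with range(ρ) ⊆ range(σ) is a positive scalar multiple of σ; (ii) if rank σ > 1 then the range of σ contains no nonzero product vector. -/
/-! Adding a PPT state ρ with range ρ ⊆ range σ to σ gives a PPT state with the same range as σ:
for positive semidefinite A, B the kernel of A + B is ker A ∩ ker B, so, passing to orthogonal
complements, range A ⊆ range (A + B). Strong extremality then gives ρ + σ = l σ, and positivity of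
ρ ≠ 0 forces l > 1. For a product vector v = a ⊗ b in range σ, the state |v⟩⟨v| is PPT, its partial
transpose being |ā ⊗ b⟩⟨ā ⊗ b|; so σ is a multiple of |v⟩⟨v| and has rank at most one. -/

open Matrix
open scoped ComplexOrder

namespace Matrix
variable {𝕜 n : Type*} [RCLike 𝕜]

open MatrixOrder in
theorem PosSemidef.eq_zero_of_neg {A : Matrix n n 𝕜} (hA : A.PosSemidef) (hA' : (-A).PosSemidef) :
    A = 0 :=
  le_antisymm (by simpa [le_iff] using hA') hA.nonneg

theorem PosSemidef.pos_of_eq_smul {A B : Matrix n n 𝕜} {c : ℝ} (hA : A.PosSemidef) (hA0 : A ≠ 0)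
    (hB : B.PosSemidef) (h : A = (c : 𝕜) • B) : 0 < c := by
  by_contra! hc
  refine hA0 (hA.eq_zero_of_neg ?_)
  rw [h, ← neg_smul, ← RCLike.ofReal_neg]
  exact hB.smul (by simpa using hc)

variable [Fintype n]

theorem IsHermitian.range_mulVecLin_le_of_ker_le [DecidableEq n] {A B : Matrix n n 𝕜}
    (hA : A.IsHermitian) (hB : B.IsHermitian)
    (h : LinearMap.ker B.mulVecLin ≤ LinearMap.ker A.mulVecLin) :
    LinearMap.range A.mulVecLin ≤ LinearMap.range B.mulVecLin := by
  rintro _ ⟨u, rfl⟩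
  have hker : LinearMap.ker (toEuclideanLin B) ≤ LinearMap.ker (toEuclideanLin A) :=
    fun w hw ↦ congrArg (WithLp.toLp 2) (h (congrArg WithLp.ofLp hw))
  have hmem : WithLp.toLp 2 (A *ᵥ u) ∈ LinearMap.range (toEuclideanLin B) := by
    rw [← Submodule.orthogonal_orthogonal (LinearMap.range _),
      (isSymmetric_toEuclideanLin_iff.mpr hB).orthogonal_range]
    intro w hw
    change inner 𝕜 w (toEuclideanLin A (WithLp.toLp 2 u)) = 0
    rw [← (isSymmetric_toEuclideanLin_iff.mpr hA), hker hw, inner_zero_left]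
  obtain ⟨x, hx⟩ := hmem
  exact ⟨WithLp.ofLp x, congrArg WithLp.ofLp hx⟩

theorem PosSemidef.ker_mulVecLin_add_le_left {A B : Matrix n n 𝕜} (hA : A.PosSemidef)
    (hB : B.PosSemidef) : LinearMap.ker (A + B).mulVecLin ≤ LinearMap.ker A.mulVecLin := by
  intro w hw
  have hsum : star w ⬝ᵥ A *ᵥ w + star w ⬝ᵥ B *ᵥ w = 0 := by
    rw [← dotProduct_add, ← add_mulVec]
    exact (congrArg (star w ⬝ᵥ ·) hw).trans (dotProduct_zero _)
  have hA0 := ((add_eq_zero_iff_of_nonneg (hA.dotProduct_mulVec_nonneg w)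
    (hB.dotProduct_mulVec_nonneg w)).mp hsum).1
  exact (hA.dotProduct_mulVec_zero_iff w).mp hA0

theorem PosSemidef.range_mulVecLin_le_add [DecidableEq n] {A B : Matrix n n 𝕜}
    (hA : A.PosSemidef) (hB : B.PosSemidef) :
    LinearMap.range A.mulVecLin ≤ LinearMap.range (A + B).mulVecLin :=
  hA.isHermitian.range_mulVecLin_le_of_ker_le (hA.add hB).isHermitian
    (hA.ker_mulVecLin_add_le_left hB)

theorem PosSemidef.range_mulVecLin_add_of_le [DecidableEq n] {A B : Matrix n n 𝕜}
    (hA : A.PosSemidef) (hB : B.PosSemidef)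
    (h : LinearMap.range A.mulVecLin ≤ LinearMap.range B.mulVecLin) :
    LinearMap.range (A + B).mulVecLin = LinearMap.range B.mulVecLin := by
  refine le_antisymm ?_ (add_comm A B ▸ hB.range_mulVecLin_le_add hA)
  rw [mulVecLin_add]
  exact (LinearMap.range_add_le _ _).trans (sup_le h le_rfl)

theorem range_mulVecLin_vecMulVec_le {R m : Type*} [CommSemiring R] (u : m → R) (v : n → R) :
    LinearMap.range (mulVecLin (vecMulVec u v)) ≤ Submodule.span R {u} := by
  rintro _ ⟨w, rfl⟩
  rw [mulVecLin_apply, vecMulVec_mulVec, op_smul_eq_smul]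
  exact Submodule.smul_mem _ _ (Submodule.mem_span_singleton_self u)

end Matrix

theorem ptranspose_add {M N : ℕ} (ρ τ : Matrix (Fin M × Fin N) (Fin M × Fin N) ℂ) :
    ptranspose (ρ + τ) = ptranspose ρ + ptranspose τ := by
  ext; simp [ptranspose]

theorem ptranspose_vecMulVec_product {M N : ℕ} (a : Fin M → ℂ) (b : Fin N → ℂ) :
    ptranspose (vecMulVec (fun p ↦ a p.1 * b p.2) (star fun p ↦ a p.1 * b p.2)) =
      vecMulVec (fun p ↦ star (a p.1) * b p.2) (star fun p ↦ star (a p.1) * b p.2) := by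
  ext
  simp only [ptranspose, of_apply, vecMulVec_apply, Pi.star_apply, star_mul', star_star]
  ring

def IsStronglyExtreme {M N : ℕ} (σ : Matrix (Fin M × Fin N) (Fin M × Fin N) ℂ) : Prop :=
  ∀ ρ : Matrix (Fin M × Fin N) (Fin M × Fin N) ℂ,
    ρ ≠ 0 → ρ.PosSemidef → (ptranspose ρ).PosSemidef →
    LinearMap.range ρ.mulVecLin = LinearMap.range σ.mulVecLin →
    ∃ l : ℝ, 0 < l ∧ ρ = (l : ℂ) • σ

namespace IsStronglyExtreme
variable {M N : ℕ} {σ : Matrix (Fin M × Fin N) (Fin M × Fin N) ℂ}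

theorem eq_smul_of_range_le (hstrong : IsStronglyExtreme σ) (hσ : σ.PosSemidef)
    (hσΓ : (ptranspose σ).PosSemidef) {ρ : Matrix (Fin M × Fin N) (Fin M × Fin N) ℂ}
    (hρ0 : ρ ≠ 0) (hρ : ρ.PosSemidef) (hρΓ : (ptranspose ρ).PosSemidef)
    (hle : LinearMap.range ρ.mulVecLin ≤ LinearMap.range σ.mulVecLin) :
    ∃ l : ℝ, 0 < l ∧ ρ = (l : ℂ) • σ := by
  have hsum0 : ρ + σ ≠ 0 := fun h ↦ hρ0 <| hρ.eq_zero_of_neg <| by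
    rwa [neg_eq_of_add_eq_zero_right h]
  obtain ⟨l, -, hl⟩ := hstrong (ρ + σ) hsum0 (hρ.add hσ)
    (ptranspose_add ρ σ ▸ hρΓ.add hσΓ) (hρ.range_mulVecLin_add_of_le hσ hle)
  have hρσ : ρ = ((l - 1 : ℝ) : ℂ) • σ := by
    rw [Complex.ofReal_sub, sub_smul, ← hl, Complex.ofReal_one, one_smul, add_sub_cancel_right]
  exact ⟨l - 1, hρ.pos_of_eq_smul hρ0 hσ hρσ, hρσ⟩

theorem rank_le_one_of_product_mem_range (hstrong : IsStronglyExtreme σ) (hσ : σ.PosSemidef)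
    (hσΓ : (ptranspose σ).PosSemidef) {a : Fin M → ℂ} {b : Fin N → ℂ}
    (hv0 : (fun p : Fin M × Fin N ↦ a p.1 * b p.2) ≠ 0)
    (hv : (fun p : Fin M × Fin N ↦ a p.1 * b p.2) ∈ LinearMap.range σ.mulVecLin) :
    σ.rank ≤ 1 := by
  set v : Fin M × Fin N → ℂ := fun p ↦ a p.1 * b p.2
  have hρ0 : vecMulVec v (star v) ≠ 0 := vecMulVec_ne_zero hv0 (star_ne_zero.mpr hv0)
  have hle : LinearMap.range (vecMulVec v (star v)).mulVecLin ≤ LinearMap.range σ.mulVecLin :=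
    (range_mulVecLin_vecMulVec_le v _).trans ((Submodule.span_singleton_le_iff_mem _ _).mpr hv)
  obtain ⟨l, hl, hρσ⟩ := hstrong.eq_smul_of_range_le hσ hσΓ hρ0 (posSemidef_vecMulVec_self_star v)
    (ptranspose_vecMulVec_product a b ▸ posSemidef_vecMulVec_self_star _) hle
  have hσρ : σ = vecMulVec ((l : ℂ)⁻¹ • v) (star v) := by
    rw [smul_vecMulVec, hρσ, smul_smul, inv_mul_cancel₀ (by exact_mod_cast hl.ne'), one_smul]
  exact hσρ ▸ rank_vecMulVec_le _ _

end IsStronglyExtreme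

theorem stronglyExtreme_props_general (M N : ℕ)
    (σ : Matrix (Fin M × Fin N) (Fin M × Fin N) ℂ)
    (hσ : σ.PosSemidef) (hσΓ : (ptranspose σ).PosSemidef)
    (hstrong : ∀ ρ : Matrix (Fin M × Fin N) (Fin M × Fin N) ℂ,
      ρ ≠ 0 → ρ.PosSemidef → (ptranspose ρ).PosSemidef →
      LinearMap.range ρ.mulVecLin = LinearMap.range σ.mulVecLin →
      ∃ l : ℝ, 0 < l ∧ ρ = (l : ℂ) • σ) :
    (∀ ρ : Matrix (Fin M × Fin N) (Fin M × Fin N) ℂ,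
      ρ ≠ 0 → ρ.PosSemidef → (ptranspose ρ).PosSemidef →
      LinearMap.range ρ.mulVecLin ≤ LinearMap.range σ.mulVecLin →
      ∃ l : ℝ, 0 < l ∧ ρ = (l : ℂ) • σ) ∧
    (1 < σ.rank → ∀ (a : Fin M → ℂ) (b : Fin N → ℂ),
      (fun p : Fin M × Fin N => a p.1 * b p.2) ≠ 0 →
      (fun p : Fin M × Fin N => a p.1 * b p.2) ∉ LinearMap.range σ.mulVecLin) :=
  have hstrong : IsStronglyExtreme σ := hstrong
  ⟨fun _ ↦ hstrong.eq_smul_of_range_le hσ hσΓ,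
    fun hrank _ _ hv0 hv ↦ (hstrong.rank_le_one_of_product_mem_range hσ hσΓ hv0 hv).not_gt hrank⟩

/-- Basic properties of strongly extreme states: (i) any PPT state whose range
is contained in the range of σ is a positive multiple of σ; (ii) if rank σ > 1
then the range of σ contains no nonzero product vector. -/
theorem stronglyExtreme_props (M N : ℕ)
    (σ : Matrix (Fin M × Fin N) (Fin M × Fin N) ℂ)
    (hσ0 : σ ≠ 0) (hσ : σ.PosSemidef) (hσΓ : (ptranspose σ).PosSemidef)
    (hstrong : ∀ ρ : Matrix (Fin M × Fin N) (Fin M × Fin N) ℂ,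
      ρ ≠ 0 → ρ.PosSemidef → (ptranspose ρ).PosSemidef →
      LinearMap.range ρ.mulVecLin = LinearMap.range σ.mulVecLin →
      ∃ l : ℝ, 0 < l ∧ ρ = (l : ℂ) • σ) :
    (∀ ρ : Matrix (Fin M × Fin N) (Fin M × Fin N) ℂ,
      ρ ≠ 0 → ρ.PosSemidef → (ptranspose ρ).PosSemidef →
      LinearMap.range ρ.mulVecLin ≤ LinearMap.range σ.mulVecLin →
      ∃ l : ℝ, 0 < l ∧ ρ = (l : ℂ) • σ) ∧
    (1 < σ.rank → ∀ (a : Fin M → ℂ) (b : Fin N → ℂ),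
      (fun p : Fin M × Fin N => a p.1 * b p.2) ≠ 0 →
      (fun p : Fin M × Fin N => a p.1 * b p.2) ∉ LinearMap.range σ.mulVecLin) :=
  stronglyExtreme_props_general M N σ hσ hσΓ hstrong
end
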